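/- Let A₁, …, A_m be Hermitian n×n matrices and 1 ≤ r ≤ n. For z ∈ ℂ^{n×r} of rank k > 0, let T_z = {W ∈ ℂ^{n×n} : W* = W, P⊥ W P⊥ = 0} where P⊥ is the orthogonal projection onto Ran(z)^⊥, and define a(z) = min { Σ_{j=1}^m ⟨W, A_j⟩_ℝ² : W ∈ T_z, ‖W‖₂ = 1 }. Define also the local constants a₁(z) = lim_{R→0} inf { Σ_j ⟨x x* − z z*, A_j⟩_ℝ² / ‖x x* − z z*‖₂² : x ∈ ℂ^{n×r}, 0 < ‖x x* − z z*‖₂ < R } and a₂(z) = lim_{R→0} inf { Σ_j ⟨x x* − y y*, A_j⟩_ℝ² / ‖x x* − y y*‖₂² : x, y ∈ ℂ^{n×r}, ‖x x* − z z*‖₂ < R, ‖y y* − z z*‖₂ < R, x x* ≠ y y* }. Then a₀ ≤ a₂(z) ≤ a₁(z) ≤ a(z) for every z ≠ 0, and a₀ = inf_{z ∈ ℂ^{n×r}, z ≠ 0} a(z), where a₀ = inf { Σ_j ⟨x x* − y y*, A_j⟩_ℝ² / ‖x x* − y y*‖₂² : x x* ≠ y y* }. -/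

import Mathlib

/-!
Every difference `x x* - y y*` lies in the tangent space `T_{x-y}`, because `x*` and `y*` agree on
`Ran(x - y)^⊥`; hence each global quotient is at least `a(x - y)`, and `inf_z a(z) ≤ a₀`.
Conversely, every `W ∈ T_z` has the form `z V* + V z*` (write `W = P W + W P - P W P` with `P` the
orthogonal projector onto `Ran z`, built from a generalized inverse of `z* z`). Along the curve
`x(t) = z + t V` one has `x x* - z z* = t (W + t V V*)`, so the local quotients at `z` tend to the
quotient of `W`, which gives `a₁(z) ≤ a(z)`. The other inequalities compare infima over nested sets.
-/

open Matrix Filter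
open scoped ComplexOrder

/-- The old `Matrix.PosSemidef.sqrt` (removed from Mathlib), with its old definition. -/
noncomputable def psdSqrtOld {k : ℕ} {A : Matrix (Fin k) (Fin k) ℂ} (hA : A.PosSemidef) :
    Matrix (Fin k) (Fin k) ℂ :=
  hA.1.eigenvectorUnitary.1 * diagonal ((↑) ∘ (√·) ∘ hA.1.eigenvalues) *
    (star hA.1.eigenvectorUnitary : Matrix (Fin k) (Fin k) ℂ)

noncomputable def frob {p q : ℕ} (x : Matrix (Fin p) (Fin q) ℂ) : ℝ :=
  Real.sqrt (Matrix.trace (xᴴ * x)).re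

noncomputable def rinner {p q : ℕ} (X Y : Matrix (Fin p) (Fin q) ℂ) : ℝ :=
  (Matrix.trace (Xᴴ * Y)).re

noncomputable def nuclear {p q : ℕ} (x : Matrix (Fin p) (Fin q) ℂ) : ℝ :=
  (Matrix.trace (psdSqrtOld (Matrix.posSemidef_conjTranspose_mul_self x))).re

noncomputable def theta {n r : ℕ} (x : Matrix (Fin n) (Fin r) ℂ) : Matrix (Fin n) (Fin n) ℂ :=
  psdSqrtOld (Matrix.posSemidef_self_mul_conjTranspose x)

noncomputable def psi {n r : ℕ} (x : Matrix (Fin n) (Fin r) ℂ) : Matrix (Fin n) (Fin n) ℂ :=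
  frob x • theta x

noncomputable def Dmet {n r : ℕ} (x y : Matrix (Fin n) (Fin r) ℂ) : ℝ :=
  ⨅ U : Matrix.unitaryGroup (Fin r) ℂ, frob (x - y * (U : Matrix (Fin r) (Fin r) ℂ))

noncomputable def dmet {n r : ℕ} (x y : Matrix (Fin n) (Fin r) ℂ) : ℝ :=
  ⨅ U : Matrix.unitaryGroup (Fin r) ℂ,
    frob (x - y * (U : Matrix (Fin r) (Fin r) ℂ)) * frob (x + y * (U : Matrix (Fin r) (Fin r) ℂ))


/-- Membership of a Hermitian `W` in the tangent space
`T_z = {W : W* = W, P⊥ W P⊥ = 0}`, where `P⊥` is the orthogonal projection onto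
`Ran(z)^⊥`: for all `u, v ⊥ Ran(z)` (i.e. `z* u = 0`, `z* v = 0`) one has `u* W v = 0`. -/
def tangentCond {n r : ℕ} (z : Matrix (Fin n) (Fin r) ℂ)
    (W : Matrix (Fin n) (Fin n) ℂ) : Prop :=
  Wᴴ = W ∧ ∀ u v : Fin n → ℂ, zᴴ *ᵥ u = 0 → zᴴ *ᵥ v = 0 → star u ⬝ᵥ (W *ᵥ v) = 0

/-- The squared global lower Lipschitz constant `a₀` of the `β` analysis map. -/
noncomputable def aGlobal {n m : ℕ} (r : ℕ) (A : Fin m → Matrix (Fin n) (Fin n) ℂ) : ℝ :=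
  sInf {t : ℝ | ∃ x y : Matrix (Fin n) (Fin r) ℂ, x * xᴴ ≠ y * yᴴ ∧
    t = (∑ j, rinner (x * xᴴ - y * yᴴ) (A j) ^ 2) / frob (x * xᴴ - y * yᴴ) ^ 2}

/-- The geometric local lower bound
`a(z) = min {Σ_j ⟨W, A_j⟩_ℝ² : W ∈ T_z, ‖W‖₂ = 1}`. -/
noncomputable def aGeo {n r m : ℕ} (A : Fin m → Matrix (Fin n) (Fin n) ℂ)
    (z : Matrix (Fin n) (Fin r) ℂ) : ℝ :=
  sInf {t : ℝ | ∃ W : Matrix (Fin n) (Fin n) ℂ,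
    tangentCond z W ∧ frob W = 1 ∧ t = ∑ j, rinner W (A j) ^ 2}

/-- The local lower bound `a₁(z)` (type I), expressed as the monotone limit (supremum
over radii `R > 0`) of the local infima. -/
noncomputable def aLoc1 {n r m : ℕ} (A : Fin m → Matrix (Fin n) (Fin n) ℂ)
    (z : Matrix (Fin n) (Fin r) ℂ) : ℝ :=
  ⨆ R : {R : ℝ // 0 < R}, sInf {t : ℝ | ∃ x : Matrix (Fin n) (Fin r) ℂ,
    0 < frob (x * xᴴ - z * zᴴ) ∧ frob (x * xᴴ - z * zᴴ) < R.1 ∧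
    t = (∑ j, rinner (x * xᴴ - z * zᴴ) (A j) ^ 2) / frob (x * xᴴ - z * zᴴ) ^ 2}

/-- The local lower bound `a₂(z)` (type II), expressed as the monotone limit (supremum
over radii `R > 0`) of the local infima. -/
noncomputable def aLoc2 {n r m : ℕ} (A : Fin m → Matrix (Fin n) (Fin n) ℂ)
    (z : Matrix (Fin n) (Fin r) ℂ) : ℝ :=
  ⨆ R : {R : ℝ // 0 < R}, sInf {t : ℝ | ∃ x y : Matrix (Fin n) (Fin r) ℂ,
    frob (x * xᴴ - z * zᴴ) < R.1 ∧ frob (y * yᴴ - z * zᴴ) < R.1 ∧ x * xᴴ ≠ y * yᴴ ∧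
    t = (∑ j, rinner (x * xᴴ - y * yᴴ) (A j) ^ 2) / frob (x * xᴴ - y * yᴴ) ^ 2}

section GeneralizedInverse

variable {𝕜 : Type*} [RCLike 𝕜] {m n : Type*} [Fintype m] [Fintype n] [DecidableEq n]

lemma Matrix.mul_cfc_inv_mul_self {M : Matrix n n 𝕜} (hM : IsSelfAdjoint M) :
    M * cfc (·⁻¹ : ℝ → ℝ) M * M = M := by
  have hc (f : ℝ → ℝ) : ContinuousOn f (spectrum ℝ M) := (Set.toFinite _).continuousOn f
  calc M * cfc (·⁻¹ : ℝ → ℝ) M * M = cfc (fun x : ℝ => x * x⁻¹ * x) M := by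
        rw [cfc_mul (fun x : ℝ => x * x⁻¹) (fun x => x) M (hc _) (hc _),
          cfc_mul (fun x : ℝ => x) (·⁻¹) M (hc _) (hc _), cfc_id' ℝ M]
    _ = cfc (fun x : ℝ => x) M := cfc_congr fun x _ => by by_cases hx : x = 0 <;> simp [hx]
    _ = M := cfc_id' ℝ M

/-- With `M⁺ = cfc (·⁻¹) M` (nonzero eigenvalues inverted, using `0⁻¹ = 0`), `B = (z* z)⁺ z*`
makes `z B` the orthogonal projector onto `Ran z`: `Y = z B z - z` satisfies `Y* Y = 0` by
`M M⁺ M = M` for `M = z* z`. -/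
lemma Matrix.exists_isHermitian_mul_and_mul_mul_eq_self (z : Matrix m n 𝕜) :
    ∃ B : Matrix n m 𝕜, (z * B).IsHermitian ∧ z * B * z = z := by
  set G := cfc (·⁻¹ : ℝ → ℝ) (zᴴ * z)
  have hG : G.IsHermitian := cfc_predicate _ _
  have hMGM : zᴴ * (z * (G * (zᴴ * z))) = zᴴ * z := by
    simpa only [Matrix.mul_assoc] using
      mul_cfc_inv_mul_self (isHermitian_conjTranspose_mul_self z)
  refine ⟨G * zᴴ, by simpa only [Matrix.mul_assoc] using isHermitian_mul_mul_conjTranspose z hG, ?_⟩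
  rw [← sub_eq_zero, ← conjTranspose_mul_self_eq_zero]
  simp only [conjTranspose_sub, conjTranspose_mul, conjTranspose_conjTranspose, hG.eq,
    Matrix.sub_mul, Matrix.mul_sub, Matrix.mul_assoc, hMGM, sub_self]

end GeneralizedInverse

section TangentSpace

variable {n r : ℕ} {z : Matrix (Fin n) (Fin r) ℂ} {W : Matrix (Fin n) (Fin n) ℂ}

lemma tangentCond.conjTranspose_mul_mul_eq_zero {κ : Type*} [Fintype κ] (hW : tangentCond z W)
    {Q : Matrix (Fin n) κ ℂ} (hQ : zᴴ * Q = 0) : Qᴴ * W * Q = 0 := by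
  ext i j
  have hcol (k : κ) : zᴴ *ᵥ (fun l => Q l k) = 0 := funext fun a => congrFun (congrFun hQ a) k
  have := hW.2 _ _ (hcol i) (hcol j)
  simp only [Matrix.mul_apply, dotProduct, mulVec, Finset.mul_sum, Finset.sum_mul, mul_assoc,
    conjTranspose_apply, Pi.star_apply, Matrix.zero_apply] at this ⊢
  rwa [Finset.sum_comm]

/-- With `P` the orthogonal projector onto `Ran z`, the condition `(1 - P) W (1 - P) = 0` gives
`W = P W + W P - P W P = N + N*` for `N = P W (1 - P/2)`, whose columns lie in `Ran z`. -/
lemma tangentCond.exists_eq_mul_conjTranspose_add (hW : tangentCond z W) :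
    ∃ V : Matrix (Fin n) (Fin r) ℂ, z * Vᴴ + V * zᴴ = W := by
  obtain ⟨B, hB, hBz⟩ := exists_isHermitian_mul_and_mul_mul_eq_self z
  have hzP : zᴴ * (z * B) = zᴴ := by rw [← hB.eq, ← conjTranspose_mul, hBz]
  have hPWP : (1 - z * B) * W * (1 - z * B) = 0 := by
    have := hW.conjTranspose_mul_mul_eq_zero (Q := 1 - z * B)
      (by rw [Matrix.mul_sub, hzP, Matrix.mul_one, sub_self])
    rwa [conjTranspose_sub, conjTranspose_one, hB.eq] at this
  refine ⟨(1 - (2⁻¹ : ℂ) • (z * B)) * W * Bᴴ, ?_⟩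
  have hleft : z * ((1 - (2⁻¹ : ℂ) • (z * B)) * W * Bᴴ)ᴴ
      = z * B * W * (1 - (2⁻¹ : ℂ) • (z * B)) := by
    simp only [conjTranspose_mul, conjTranspose_conjTranspose, hW.1, conjTranspose_sub,
      conjTranspose_one, conjTranspose_smul, hB.eq, star_inv₀, star_ofNat, Matrix.mul_assoc]
  have hright : (1 - (2⁻¹ : ℂ) • (z * B)) * W * Bᴴ * zᴴ
      = (1 - (2⁻¹ : ℂ) • (z * B)) * W * (z * B) := by
    rw [Matrix.mul_assoc _ Bᴴ, ← conjTranspose_mul, hB.eq]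
  rw [hleft, hright]
  generalize z * B = P at hPWP
  calc _ = W - (1 - P) * W * (1 - P) := by
        simp only [Matrix.mul_sub, Matrix.sub_mul, Matrix.mul_smul, Matrix.smul_mul,
          Matrix.mul_one, Matrix.one_mul, Matrix.mul_assoc]
        module
    _ = W := by rw [hPWP, sub_zero]

lemma tangentCond.smul (c : ℝ) (hW : tangentCond z W) : tangentCond z ((c : ℂ) • W) := by
  refine ⟨by rw [conjTranspose_smul, Complex.star_def, Complex.conj_ofReal, hW.1], ?_⟩
  intro u v hu hv
  rw [smul_mulVec, dotProduct_smul, hW.2 u v hu hv, smul_zero]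

/-- On `Ran(x - y)^⊥` the maps `x*` and `y*` agree. -/
lemma tangentCond_sub_mul_conjTranspose (x y : Matrix (Fin n) (Fin r) ℂ) :
    tangentCond (x - y) (x * xᴴ - y * yᴴ) := by
  refine ⟨by simp only [conjTranspose_sub, conjTranspose_mul, conjTranspose_conjTranspose], ?_⟩
  intro u v hu hv
  have hxy (w : Fin n → ℂ) (hw : (x - y)ᴴ *ᵥ w = 0) : xᴴ *ᵥ w = yᴴ *ᵥ w := by
    rwa [conjTranspose_sub, sub_mulVec, sub_eq_zero] at hw
  have hgram (M : Matrix (Fin n) (Fin r) ℂ) :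
      star u ⬝ᵥ ((M * Mᴴ) *ᵥ v) = star (Mᴴ *ᵥ u) ⬝ᵥ (Mᴴ *ᵥ v) := by
    rw [← mulVec_mulVec, dotProduct_mulVec, star_mulVec, conjTranspose_conjTranspose,
      dotProduct_mulVec]
  rw [sub_mulVec, dotProduct_sub, hgram, hgram, hxy u hu, hxy v hv, sub_self]

lemma tangentCond_mul_conjTranspose_self (z : Matrix (Fin n) (Fin r) ℂ) :
    tangentCond z (z * zᴴ) := by
  simpa using tangentCond_sub_mul_conjTranspose z 0

end TangentSpace

section FrobeniusGeometry

variable {p q : ℕ}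

lemma rinner_self_nonneg (X : Matrix (Fin p) (Fin q) ℂ) : 0 ≤ rinner X X :=
  (Complex.nonneg_iff.mp (posSemidef_conjTranspose_mul_self X).trace_nonneg).1

lemma rinner_self_eq_zero {X : Matrix (Fin p) (Fin q) ℂ} : rinner X X = 0 ↔ X = 0 := by
  rw [← trace_conjTranspose_mul_self_eq_zero_iff]
  refine ⟨fun h => Complex.ext h ?_, fun h => by rw [rinner, h, Complex.zero_re]⟩
  exact (Complex.nonneg_iff.mp (posSemidef_conjTranspose_mul_self X).trace_nonneg).2.symm

lemma frob_pos {X : Matrix (Fin p) (Fin q) ℂ} (hX : X ≠ 0) : 0 < frob X :=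
  Real.sqrt_pos.2 ((rinner_self_nonneg X).lt_of_ne' (mt rinner_self_eq_zero.1 hX))

lemma ne_zero_of_frob_pos {X : Matrix (Fin p) (Fin q) ℂ} (hX : 0 < frob X) : X ≠ 0 := by
  rintro rfl
  simp [frob] at hX

lemma rinner_smul_left (c : ℝ) (X Y : Matrix (Fin p) (Fin q) ℂ) :
    rinner ((c : ℂ) • X) Y = c * rinner X Y := by
  simp [rinner, conjTranspose_smul, trace_smul]

lemma rinner_smul_right (c : ℝ) (X Y : Matrix (Fin p) (Fin q) ℂ) :
    rinner X ((c : ℂ) • Y) = c * rinner X Y := by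
  simp [rinner, trace_smul]

lemma frob_smul (c : ℝ) (X : Matrix (Fin p) (Fin q) ℂ) : frob ((c : ℂ) • X) = |c| * frob X := by
  rw [frob, ← rinner, rinner_smul_left, rinner_smul_right, ← mul_assoc,
    Real.sqrt_mul (mul_self_nonneg c), Real.sqrt_mul_self_eq_abs, frob, rinner]

lemma continuous_rinner_left (Y : Matrix (Fin p) (Fin q) ℂ) : Continuous fun X => rinner X Y := by
  unfold rinner
  fun_prop

lemma continuous_frob : Continuous (frob : Matrix (Fin p) (Fin q) ℂ → ℝ) := by
  unfold frob
  fun_prop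

end FrobeniusGeometry

open Topology

noncomputable def betaQuot {p q m : ℕ} (A : Fin m → Matrix (Fin p) (Fin q) ℂ)
    (X : Matrix (Fin p) (Fin q) ℂ) : ℝ :=
  (∑ j, rinner X (A j) ^ 2) / frob X ^ 2

section BetaQuot

variable {p q m : ℕ} (A : Fin m → Matrix (Fin p) (Fin q) ℂ)

lemma betaQuot_nonneg (X : Matrix (Fin p) (Fin q) ℂ) : 0 ≤ betaQuot A X := by
  unfold betaQuot
  positivity

lemma betaQuot_smul {c : ℝ} (hc : c ≠ 0) (X : Matrix (Fin p) (Fin q) ℂ) :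
    betaQuot A ((c : ℂ) • X) = betaQuot A X := by
  simp only [betaQuot, rinner_smul_left, frob_smul, mul_pow, sq_abs, ← Finset.mul_sum]
  exact mul_div_mul_left _ _ (pow_ne_zero 2 hc)

lemma betaQuot_of_frob_eq_one {W : Matrix (Fin p) (Fin q) ℂ} (hW : frob W = 1) :
    betaQuot A W = ∑ j, rinner W (A j) ^ 2 := by
  rw [betaQuot, hW, one_pow, div_one]

lemma continuousAt_betaQuot {X : Matrix (Fin p) (Fin q) ℂ} (hX : X ≠ 0) :
    ContinuousAt (betaQuot A) X := by
  refine ContinuousAt.div ?_ (continuous_frob.pow 2).continuousAt (pow_pos (frob_pos hX) 2).ne'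
  exact (continuous_finsetSum _ fun j _ => (continuous_rinner_left (A j)).pow 2).continuousAt

end BetaQuot

section LowerBounds

variable {n r m : ℕ} (A : Fin m → Matrix (Fin n) (Fin n) ℂ)

def quotSetGlobal (r : ℕ) : Set ℝ :=
  {t | ∃ x y : Matrix (Fin n) (Fin r) ℂ, x * xᴴ ≠ y * yᴴ ∧ t = betaQuot A (x * xᴴ - y * yᴴ)}

def quotSetLoc1 (z : Matrix (Fin n) (Fin r) ℂ) (R : ℝ) : Set ℝ :=
  {t | ∃ x : Matrix (Fin n) (Fin r) ℂ, 0 < frob (x * xᴴ - z * zᴴ) ∧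
    frob (x * xᴴ - z * zᴴ) < R ∧ t = betaQuot A (x * xᴴ - z * zᴴ)}

def quotSetLoc2 (z : Matrix (Fin n) (Fin r) ℂ) (R : ℝ) : Set ℝ :=
  {t | ∃ x y : Matrix (Fin n) (Fin r) ℂ, frob (x * xᴴ - z * zᴴ) < R ∧
    frob (y * yᴴ - z * zᴴ) < R ∧ x * xᴴ ≠ y * yᴴ ∧ t = betaQuot A (x * xᴴ - y * yᴴ)}

def quotSetGeo (z : Matrix (Fin n) (Fin r) ℂ) : Set ℝ :=
  {t | ∃ W : Matrix (Fin n) (Fin n) ℂ, tangentCond z W ∧ frob W = 1 ∧ t = ∑ j, rinner W (A j) ^ 2}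

lemma aGlobal_eq_sInf : aGlobal r A = sInf (quotSetGlobal A r) := rfl

lemma aLoc1_eq_iSup (z : Matrix (Fin n) (Fin r) ℂ) :
    aLoc1 A z = ⨆ R : {R : ℝ // 0 < R}, sInf (quotSetLoc1 A z R) := rfl

lemma aLoc2_eq_iSup (z : Matrix (Fin n) (Fin r) ℂ) :
    aLoc2 A z = ⨆ R : {R : ℝ // 0 < R}, sInf (quotSetLoc2 A z R) := rfl

lemma aGeo_eq_sInf (z : Matrix (Fin n) (Fin r) ℂ) : aGeo A z = sInf (quotSetGeo A z) := rfl

lemma bddBelow_quotSetGlobal : BddBelow (quotSetGlobal A r) :=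
  ⟨0, by rintro _ ⟨x, y, -, rfl⟩; exact betaQuot_nonneg A _⟩

lemma bddBelow_quotSetLoc1 (z : Matrix (Fin n) (Fin r) ℂ) (R : ℝ) :
    BddBelow (quotSetLoc1 A z R) :=
  ⟨0, by rintro _ ⟨x, -, -, rfl⟩; exact betaQuot_nonneg A _⟩

lemma bddBelow_quotSetLoc2 (z : Matrix (Fin n) (Fin r) ℂ) (R : ℝ) :
    BddBelow (quotSetLoc2 A z R) :=
  ⟨0, by rintro _ ⟨x, y, -, -, -, rfl⟩; exact betaQuot_nonneg A _⟩

lemma bddBelow_quotSetGeo (z : Matrix (Fin n) (Fin r) ℂ) : BddBelow (quotSetGeo A z) :=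
  ⟨0, by rintro _ ⟨W, -, -, rfl⟩; positivity⟩

lemma quotSetLoc1_subset_quotSetLoc2 (z : Matrix (Fin n) (Fin r) ℂ) (R : ℝ) :
    quotSetLoc1 A z R ⊆ quotSetLoc2 A z R := by
  rintro _ ⟨x, hpos, hlt, rfl⟩
  refine ⟨x, z, hlt, ?_, sub_ne_zero.1 (ne_zero_of_frob_pos hpos), rfl⟩
  simpa [frob] using hpos.trans hlt

lemma quotSetLoc2_subset_quotSetGlobal (z : Matrix (Fin n) (Fin r) ℂ) (R : ℝ) :
    quotSetLoc2 A z R ⊆ quotSetGlobal A r := by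
  rintro _ ⟨x, y, -, -, hxy, rfl⟩
  exact ⟨x, y, hxy, rfl⟩

lemma betaQuot_mem_quotSetGeo {z : Matrix (Fin n) (Fin r) ℂ} {W : Matrix (Fin n) (Fin n) ℂ}
    (hW : tangentCond z W) (hW0 : W ≠ 0) : betaQuot A W ∈ quotSetGeo A z := by
  have hc : (frob W)⁻¹ ≠ 0 := inv_ne_zero (frob_pos hW0).ne'
  have hunit : frob ((((frob W)⁻¹ : ℝ) : ℂ) • W) = 1 := by
    rw [frob_smul, abs_inv, abs_of_pos (frob_pos hW0), inv_mul_cancel₀ (frob_pos hW0).ne']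
  refine ⟨_, hW.smul _, hunit, ?_⟩
  rw [← betaQuot_of_frob_eq_one A hunit, betaQuot_smul A hc]

lemma aGeo_le_betaQuot {z : Matrix (Fin n) (Fin r) ℂ} {W : Matrix (Fin n) (Fin n) ℂ}
    (hW : tangentCond z W) (hW0 : W ≠ 0) : aGeo A z ≤ betaQuot A W :=
  (aGeo_eq_sInf A z).trans_le
    (csInf_le (bddBelow_quotSetGeo A z) (betaQuot_mem_quotSetGeo A hW hW0))

/-- If `W = z V* + V z*`, the curve `x(t) = z + t V` satisfies `x x* - z z* = t (W + t V V*)`,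
so its quotients tend to `betaQuot A W` as `t → 0⁺`. -/
lemma exists_tendsto_betaQuot_eventually_mem_quotSetLoc1 {z : Matrix (Fin n) (Fin r) ℂ}
    {W : Matrix (Fin n) (Fin n) ℂ} (hW : tangentCond z W) (hW0 : W ≠ 0) {R : ℝ} (hR : 0 < R) :
    ∃ f : ℝ → ℝ, Tendsto f (𝓝[>] 0) (𝓝 (betaQuot A W)) ∧
      ∀ᶠ t in 𝓝[>] 0, f t ∈ quotSetLoc1 A z R := by
  obtain ⟨V, hV⟩ := hW.exists_eq_mul_conjTranspose_add
  set Y : ℝ → Matrix (Fin n) (Fin n) ℂ := fun t => W + (t : ℂ) • (V * Vᴴ)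
  have hcurve (t : ℝ) : (z + (t : ℂ) • V) * (z + (t : ℂ) • V)ᴴ - z * zᴴ = (t : ℂ) • Y t := by
    simp only [Y, conjTranspose_add, conjTranspose_smul, Complex.star_def, Complex.conj_ofReal,
      ← hV, Matrix.add_mul, Matrix.mul_add, Matrix.smul_mul, Matrix.mul_smul, smul_add, smul_smul]
    abel
  have hY : Tendsto Y (𝓝[>] 0) (𝓝 W) := by
    have hYc : Continuous Y := by fun_prop
    simpa [Y] using hYc.continuousWithinAt (s := Set.Ioi 0) (x := 0) |>.tendsto
  have hsmall : Tendsto (fun t => t * frob (Y t)) (𝓝[>] 0) (𝓝 0) := by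
    simpa using (tendsto_nhdsWithin_of_tendsto_nhds tendsto_id).mul
      ((continuous_frob.tendsto W).comp hY)
  refine ⟨fun t => betaQuot A (Y t), (continuousAt_betaQuot A hW0).tendsto.comp hY, ?_⟩
  filter_upwards [self_mem_nhdsWithin, hY.eventually_ne hW0, hsmall.eventually (gt_mem_nhds hR)]
    with t (ht : 0 < t) hYt hlt
  have hfrob : frob ((t : ℂ) • Y t) = t * frob (Y t) := by rw [frob_smul, abs_of_pos ht]
  refine ⟨z + (t : ℂ) • V, ?_, ?_, ?_⟩ <;> rw [hcurve]
  · rw [hfrob]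
    exact mul_pos ht (frob_pos hYt)
  · rwa [hfrob]
  · exact (betaQuot_smul A ht.ne' _).symm

lemma quotSetLoc1_nonempty {z : Matrix (Fin n) (Fin r) ℂ} (hz : z ≠ 0) {R : ℝ} (hR : 0 < R) :
    (quotSetLoc1 A z R).Nonempty := by
  have hzz : z * zᴴ ≠ 0 := mt self_mul_conjTranspose_eq_zero.1 hz
  obtain ⟨f, -, hf⟩ := exists_tendsto_betaQuot_eventually_mem_quotSetLoc1 A
    (tangentCond_mul_conjTranspose_self z) hzz hR
  obtain ⟨t, ht⟩ := hf.exists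
  exact ⟨f t, ht⟩

lemma sInf_quotSetLoc1_le_betaQuot {z : Matrix (Fin n) (Fin r) ℂ} {W : Matrix (Fin n) (Fin n) ℂ}
    (hW : tangentCond z W) (hW0 : W ≠ 0) {R : ℝ} (hR : 0 < R) :
    sInf (quotSetLoc1 A z R) ≤ betaQuot A W := by
  obtain ⟨f, hf, hmem⟩ := exists_tendsto_betaQuot_eventually_mem_quotSetLoc1 A hW hW0 hR
  exact ge_of_tendsto hf (hmem.mono fun t ht => csInf_le (bddBelow_quotSetLoc1 A z R) ht)

lemma sInf_quotSetLoc1_le_aGeo {z : Matrix (Fin n) (Fin r) ℂ} (hz : z ≠ 0) {R : ℝ} (hR : 0 < R) :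
    sInf (quotSetLoc1 A z R) ≤ aGeo A z := by
  have hzz : z * zᴴ ≠ 0 := mt self_mul_conjTranspose_eq_zero.1 hz
  rw [aGeo_eq_sInf]
  refine le_csInf ⟨_, betaQuot_mem_quotSetGeo A (tangentCond_mul_conjTranspose_self z) hzz⟩ ?_
  rintro _ ⟨W, hW, hW1, rfl⟩
  rw [← betaQuot_of_frob_eq_one A hW1]
  exact sInf_quotSetLoc1_le_betaQuot A hW (ne_zero_of_frob_pos (hW1 ▸ one_pos)) hR

lemma sInf_quotSetLoc2_le_sInf_quotSetLoc1 {z : Matrix (Fin n) (Fin r) ℂ} (hz : z ≠ 0) {R : ℝ}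
    (hR : 0 < R) : sInf (quotSetLoc2 A z R) ≤ sInf (quotSetLoc1 A z R) :=
  csInf_le_csInf (bddBelow_quotSetLoc2 A z R) (quotSetLoc1_nonempty A hz hR)
    (quotSetLoc1_subset_quotSetLoc2 A z R)

lemma aLoc1_le_aGeo {z : Matrix (Fin n) (Fin r) ℂ} (hz : z ≠ 0) : aLoc1 A z ≤ aGeo A z := by
  rw [aLoc1_eq_iSup]
  exact ciSup_le fun R => sInf_quotSetLoc1_le_aGeo A hz R.2

lemma aLoc2_le_aLoc1 {z : Matrix (Fin n) (Fin r) ℂ} (hz : z ≠ 0) : aLoc2 A z ≤ aLoc1 A z := by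
  rw [aLoc1_eq_iSup, aLoc2_eq_iSup]
  exact ciSup_mono ⟨aGeo A z, by rintro _ ⟨R, rfl⟩; exact sInf_quotSetLoc1_le_aGeo A hz R.2⟩
    fun R => sInf_quotSetLoc2_le_sInf_quotSetLoc1 A hz R.2

lemma aGlobal_le_aLoc2 {z : Matrix (Fin n) (Fin r) ℂ} (hz : z ≠ 0) : aGlobal r A ≤ aLoc2 A z := by
  have hbdd : BddAbove (Set.range fun R : {R : ℝ // 0 < R} => sInf (quotSetLoc2 A z R)) :=
    ⟨aGeo A z, by
      rintro _ ⟨R, rfl⟩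
      exact (sInf_quotSetLoc2_le_sInf_quotSetLoc1 A hz R.2).trans
        (sInf_quotSetLoc1_le_aGeo A hz R.2)⟩
  rw [aGlobal_eq_sInf, aLoc2_eq_iSup]
  refine le_ciSup_of_le hbdd ⟨1, one_pos⟩ (csInf_le_csInf (bddBelow_quotSetGlobal A)
    ((quotSetLoc1_nonempty A hz one_pos).mono (quotSetLoc1_subset_quotSetLoc2 A z 1)) ?_)
  exact quotSetLoc2_subset_quotSetGlobal A z 1

lemma aGlobal_le_aGeo {z : Matrix (Fin n) (Fin r) ℂ} (hz : z ≠ 0) : aGlobal r A ≤ aGeo A z :=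
  (aGlobal_le_aLoc2 A hz).trans ((aLoc2_le_aLoc1 A hz).trans (aLoc1_le_aGeo A hz))

/-- The bound `aGeo A (x - y) ≤ betaQuot A (x x* - y y*)` shows `inf aGeo ≤ aGlobal`. When every
`z` vanishes, both sets are empty and both infima are `sInf ∅ = 0`. -/
lemma aGlobal_eq_sInf_aGeo :
    aGlobal r A = sInf {t : ℝ | ∃ z : Matrix (Fin n) (Fin r) ℂ, z ≠ 0 ∧ t = aGeo A z} := by
  by_cases hex : ∃ z₀ : Matrix (Fin n) (Fin r) ℂ, z₀ ≠ 0
  · obtain ⟨z₀, hz₀⟩ := hex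
    have hbdd : BddBelow {t : ℝ | ∃ z : Matrix (Fin n) (Fin r) ℂ, z ≠ 0 ∧ t = aGeo A z} :=
      ⟨0, by rintro _ ⟨z, -, rfl⟩; exact Real.sInf_nonneg fun t ⟨W, _, _, ht⟩ => ht ▸ by positivity⟩
    refine le_antisymm (le_csInf ⟨_, z₀, hz₀, rfl⟩ ?_) (le_csInf ⟨_, z₀, 0, ?_, rfl⟩ ?_)
    · rintro _ ⟨z, hz, rfl⟩
      exact aGlobal_le_aGeo A hz
    · simpa using mt self_mul_conjTranspose_eq_zero.1 hz₀
    · rintro _ ⟨x, y, hxy, rfl⟩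
      have hxy' : x - y ≠ 0 := sub_ne_zero.2 fun h => hxy (by rw [h])
      exact (csInf_le hbdd ⟨x - y, hxy', rfl⟩).trans
        (aGeo_le_betaQuot A (tangentCond_sub_mul_conjTranspose x y) (sub_ne_zero.2 hxy))
  · push Not at hex
    have hG : quotSetGlobal A r = ∅ :=
      Set.eq_empty_of_forall_notMem fun _ ⟨x, y, hxy, _⟩ => hxy (by rw [hex x, hex y])
    have hZ : {t : ℝ | ∃ z : Matrix (Fin n) (Fin r) ℂ, z ≠ 0 ∧ t = aGeo A z} = ∅ :=
      Set.eq_empty_of_forall_notMem fun _ ⟨z, hz, _⟩ => hz (hex z)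
    rw [aGlobal_eq_sInf, hG, hZ]

end LowerBounds

theorem a0_squeeze_and_inf_general (n r m : ℕ)
    (A : Fin m → Matrix (Fin n) (Fin n) ℂ) :
    (∀ z : Matrix (Fin n) (Fin r) ℂ, z ≠ 0 →
      aGlobal r A ≤ aLoc2 A z ∧
      aLoc2 A z ≤ aLoc1 A z ∧ aLoc1 A z ≤ aGeo A z) ∧
    aGlobal r A =
      sInf {t : ℝ | ∃ z : Matrix (Fin n) (Fin r) ℂ, z ≠ 0 ∧ t = aGeo A z} :=
  ⟨fun _ hz => ⟨aGlobal_le_aLoc2 A hz, aLoc2_le_aLoc1 A hz, aLoc1_le_aGeo A hz⟩,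
    aGlobal_eq_sInf_aGeo A⟩

/-- `a₀ ≤ a₂(z) ≤ a₁(z) ≤ a(z)` for every `z ≠ 0`, and
`a₀ = inf_{z ≠ 0} a(z)`. -/
theorem a0_squeeze_and_inf (n r m : ℕ) (hr : 1 ≤ r) (hnr : r ≤ n)
    (A : Fin m → Matrix (Fin n) (Fin n) ℂ) (hA : ∀ j, (A j).IsHermitian) :
    (∀ z : Matrix (Fin n) (Fin r) ℂ, z ≠ 0 →
      aGlobal r A ≤ aLoc2 A z ∧
      aLoc2 A z ≤ aLoc1 A z ∧ aLoc1 A z ≤ aGeo A z) ∧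
    aGlobal r A =
      sInf {t : ℝ | ∃ z : Matrix (Fin n) (Fin r) ℂ, z ≠ 0 ∧ t = aGeo A z} :=
  a0_squeeze_and_inf_general n r m A
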